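/- Let α ≥ 0 and β ∈ ℝ satisfy β − 2α/3 > −π/2 and β + 2α/3 < π/2, and let ε > 0 be small enough that β + (2α/3)(1+ε) < π/2. Then there exists C > 0 such that for every δ > 0, every admissible cutoff χ on [0,δ] with sup_{u ∈ [0,δ]} |χ'(u)| ≤ (1+ε)/δ, and every u ∈ [0,δ], one has Re( e^{−iβ} · J'_{−iα/3}(u)^{−2} ) ≥ C, where J'_{−iα/3}(u) = (1 − i(α/3) u χ'(u)) e^{−i(α/3) χ(u)}. -/

import Mathlib

open Real Set Complex

/-- An admissible cutoff on `[0, δ]`. -/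
def IsAdmissibleCutoff (δ : ℝ) (χ : ℝ → ℝ) : Prop :=
  ContDiff ℝ (⊤ : ℕ∞) χ ∧ Antitone χ ∧ (∀ u, χ u ∈ Set.Icc (0:ℝ) 1) ∧
    (∀ᶠ u in nhds (0:ℝ), χ u = 1) ∧ (∃ a < δ, ∀ u > a, χ u = 0)

/-- `J'_θ(u) = (1 + θ u χ'(u)) e^{θ χ(u)}`; here we use `θ = −iα/3`, so that
`J'_{−iα/3}(u) = (1 − i(α/3) u χ'(u)) e^{−i(α/3) χ(u)}`. -/
noncomputable def Jder (χ : ℝ → ℝ) (θ : ℂ) (u : ℝ) : ℂ :=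
  (1 + θ * (u : ℂ) * ((deriv χ u : ℝ) : ℂ)) * Complex.exp (θ * ((χ u : ℝ) : ℂ))

lemma antitone_deriv_nonpos' {f : ℝ → ℝ} {u : ℝ} (hf : Antitone f)
    (hd : DifferentiableAt ℝ f u) : deriv f u ≤ 0 := by
  have h := hd.hasDerivAt
  rw [hasDerivAt_iff_tendsto_slope] at h
  have h' : Filter.Tendsto (slope f u) (nhdsWithin u (Set.Ioi u)) (nhds (deriv f u)) :=
    h.mono_left (nhdsWithin_mono _ fun y hy => ne_of_gt hy)
  refine le_of_tendsto h' ?_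
  filter_upwards [self_mem_nhdsWithin] with y hy
  have h1 : f y ≤ f u := hf (le_of_lt hy)
  rw [slope_def_field]
  apply div_nonpos_of_nonpos_of_nonneg <;>
    simp only [Set.mem_Ioi] at hy <;> linarith

lemma arctan_le_self' {t : ℝ} (ht : 0 ≤ t) : Real.arctan t ≤ t := by
  have h0 : 0 ≤ Real.arctan t := by
    rw [← Real.arctan_zero]; exact Real.arctan_strictMono.monotone ht
  calc Real.arctan t ≤ Real.tan (Real.arctan t) :=
        Real.le_tan h0 (Real.arctan_lt_pi_div_two t)
    _ = t := Real.tan_arctan t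

lemma key_real (M T ψ t : ℝ) (hMπ : M < π / 2) (hTt : t ≤ T)
    (ht0 : 0 ≤ t) (hhi : ψ ≤ M) (hlo : -M ≤ ψ - 2 * t) :
    Real.cos M / (1 + T ^ 2) ≤
      (Real.cos ψ * (1 - t ^ 2) + 2 * t * Real.sin ψ) / (1 + t ^ 2) ^ 2 := by
  have hM0 : 0 ≤ M := by linarith
  have harc1 : Real.arctan t ≤ t := arctan_le_self' ht0
  have harc0 : 0 ≤ Real.arctan t := by
    rw [← Real.arctan_zero]; exact Real.arctan_strictMono.monotone ht0
  set φ := ψ - 2 * Real.arctan t with hφ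
  have hφM : |φ| ≤ M := abs_le.2 ⟨by simp only [hφ]; linarith, by simp only [hφ]; linarith⟩
  have hcosM : 0 < Real.cos M :=
    Real.cos_pos_of_mem_Ioo ⟨by linarith [Real.pi_pos], hMπ⟩
  have hcos : Real.cos M ≤ Real.cos φ := by
    rw [← Real.cos_abs φ]
    exact Real.cos_le_cos_of_nonneg_of_le_pi (abs_nonneg _) (by linarith [Real.pi_pos]) hφM
  have hsqpos : 0 < Real.sqrt (1 + t ^ 2) := Real.sqrt_pos.2 (by positivity)
  have hsq : Real.sqrt (1 + t ^ 2) * Real.sqrt (1 + t ^ 2) = 1 + t ^ 2 :=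
    Real.mul_self_sqrt (by positivity)
  have hnum : Real.cos ψ * (1 - t ^ 2) + 2 * t * Real.sin ψ = (1 + t ^ 2) * Real.cos φ := by
    rw [hφ, Real.cos_sub, Real.cos_two_mul, Real.sin_two_mul, Real.sin_arctan, Real.cos_arctan]
    field_simp
    rw [Real.sq_sqrt (by positivity)]
    ring
  rw [hnum]
  have h1t : (0:ℝ) < 1 + t ^ 2 := by positivity
  have h1T : (0:ℝ) < 1 + T ^ 2 := by nlinarith
  rw [div_le_div_iff₀ h1T (by positivity)]
  have ht2T2 : t ^ 2 ≤ T ^ 2 := by nlinarith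
  nlinarith [mul_nonneg (mul_nonneg (sub_nonneg.2 hcos) h1t.le) h1T.le,
    mul_nonneg (mul_nonneg hcosM.le h1t.le) (sub_nonneg.2 ht2T2)]

/-- If `α ≥ 0`, `β − 2α/3 > −π/2`, `β + 2α/3 < π/2` and `ε > 0` is small enough that
`β + (2α/3)(1+ε) < π/2`, then there is `C > 0` such that for every `δ > 0`, every
admissible cutoff `χ` on `[0,δ]` with `|χ'| ≤ (1+ε)/δ` and every `u ∈ [0,δ]`,
`Re(e^{−iβ} J'_{−iα/3}(u)⁻²) ≥ C`. -/
theorem re_exp_negIbeta_jder_inv_sq_lower_bound (α β ε : ℝ) (hα : 0 ≤ α)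
    (h1 : -(π / 2) < β - 2 * α / 3) (h2 : β + 2 * α / 3 < π / 2)
    (hε : 0 < ε) (h3 : β + (2 * α / 3) * (1 + ε) < π / 2) :
    ∃ C > (0:ℝ), ∀ δ > (0:ℝ), ∀ χ : ℝ → ℝ, IsAdmissibleCutoff δ χ →
      (∀ u ∈ Set.Icc (0:ℝ) δ, |deriv χ u| ≤ (1 + ε) / δ) →
      ∀ u ∈ Set.Icc (0:ℝ) δ,
        C ≤ (Complex.exp (-Complex.I * (β : ℂ)) *
              ((Jder χ (-Complex.I * ((α : ℂ) / 3)) u) ^ 2)⁻¹).re := by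
  set T : ℝ := α / 3 * (1 + ε) with hT
  set M : ℝ := max |(-β + 2 * α / 3)| |(β + (2 * α / 3) * (1 + ε))| with hM
  have hT0 : 0 ≤ T := by positivity
  have hM0 : 0 ≤ M := le_trans (abs_nonneg _) (le_max_left _ _)
  have hMπ : M < π / 2 := by
    rw [hM, max_lt_iff]
    constructor
    · rw [abs_lt]; constructor <;> nlinarith
    · rw [abs_lt]; constructor <;> nlinarith
  have hcosM : 0 < Real.cos M :=
    Real.cos_pos_of_mem_Ioo ⟨by linarith [Real.pi_pos], hMπ⟩
  refine ⟨Real.cos M / (1 + T ^ 2), by positivity, ?_⟩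
  intro δ hδ χ hχ hχ' u hu
  obtain ⟨hsmooth, hanti, hrange, -, -⟩ := hχ
  obtain ⟨hu0, huδ⟩ := hu
  set t : ℝ := -(α / 3 * u * deriv χ u) with ht
  set c : ℝ := α / 3 * χ u with hc
  set ψ : ℝ := -β + 2 * c with hψ
  have hderiv_le : deriv χ u ≤ 0 :=
    antitone_deriv_nonpos' hanti ((hsmooth.differentiable (by simp)).differentiableAt)
  have ht0 : 0 ≤ t := by
    rw [ht]
    have : α / 3 * u * deriv χ u ≤ 0 :=
      mul_nonpos_of_nonneg_of_nonpos (by positivity) hderiv_le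
    linarith
  have htT : t ≤ T := by
    have habs := hχ' u ⟨hu0, huδ⟩
    have h4 : -deriv χ u ≤ (1 + ε) / δ := by
      rw [abs_le] at habs; linarith [habs.1]
    have h5 : u * (-deriv χ u) ≤ δ * ((1 + ε) / δ) := by
      apply mul_le_mul huδ h4 (by linarith) (le_of_lt hδ)
    rw [ht, hT]
    have h6 : δ * ((1 + ε) / δ) = 1 + ε := by field_simp
    rw [h6] at h5
    nlinarith
  have hχu0 : 0 ≤ χ u := (hrange u).1
  have hχu1 : χ u ≤ 1 := (hrange u).2
  have hhi : ψ ≤ M := by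
    have : ψ ≤ -β + 2 * α / 3 := by rw [hψ, hc]; nlinarith
    calc ψ ≤ -β + 2 * α / 3 := this
      _ ≤ |(-β + 2 * α / 3)| := le_abs_self _
      _ ≤ M := le_max_left _ _
  have hlo : -M ≤ ψ - 2 * t := by
    have h7 : β + (2 * α / 3) * (1 + ε) ≤ M :=
      le_trans (le_abs_self _) (le_max_right _ _)
    have hc0 : 0 ≤ c := by rw [hc]; positivity
    have h8 : ψ - 2 * t ≥ -β - 2 * T := by rw [hψ]; linarith
    have h9 : 2 * T = (2 * α / 3) * (1 + ε) := by rw [hT]; ring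
    linarith
  clear_value ψ c t
  -- compute the real part
  have hre : (Complex.exp (-Complex.I * (β : ℂ)) *
        ((Jder χ (-Complex.I * ((α : ℂ) / 3)) u) ^ 2)⁻¹).re
      = (Real.cos ψ * (1 - t ^ 2) + 2 * t * Real.sin ψ) / (1 + t ^ 2) ^ 2 := by
    have hJ : Jder χ (-Complex.I * ((α : ℂ) / 3)) u
        = (1 + Complex.I * (t : ℂ)) * Complex.exp (((-c : ℝ) : ℂ) * Complex.I) := by
      unfold Jder
      congr 1
      · rw [ht]; push_cast; ring
      · congr 1; rw [hc]; push_cast; ring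
    rw [hJ, mul_pow, ← Complex.exp_nat_mul, mul_inv, ← Complex.exp_neg, ← mul_assoc,
      mul_comm (Complex.exp _) _, mul_assoc, ← Complex.exp_add]
    have hexp : -Complex.I * (β : ℂ) + -((2:ℕ) * (((-c : ℝ) : ℂ) * Complex.I))
        = ((ψ : ℝ) : ℂ) * Complex.I := by
      rw [hψ]; push_cast; ring
    rw [hexp, Complex.exp_mul_I]
    have hw : ((1 + Complex.I * (t : ℂ)) ^ 2)⁻¹
        = (((1 - t ^ 2 : ℝ) : ℂ) + ((2 * t : ℝ) : ℂ) * Complex.I)⁻¹ := by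
      congr 1
      have : Complex.I ^ 2 = -1 := Complex.I_sq
      push_cast
      ring_nf
      rw [Complex.I_sq]
      ring
    rw [hw]
    rw [← Complex.ofReal_cos, ← Complex.ofReal_sin]
    simp only [Complex.mul_re, Complex.add_re, Complex.add_im, Complex.ofReal_re,
      Complex.ofReal_im, Complex.mul_im, Complex.I_re, Complex.I_im,
      Complex.inv_re, Complex.inv_im, Complex.normSq_apply]
    have hDne : ((1 - t ^ 2) * (1 - t ^ 2) + 2 * t * (2 * t)) ≠ 0 := by nlinarith [sq_nonneg t, sq_nonneg (1 - t^2)]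
    simp only [mul_zero, zero_mul, sub_zero, add_zero, zero_add, mul_one]
    rw [show (1 - t ^ 2) * (1 - t ^ 2) + 2 * t * (2 * t) = (1 + t ^ 2) ^ 2 by ring]
    field_simp [hDne]
    ring
  rw [hre]
  exact key_real M T ψ t hMπ htT ht0 hhi hlo
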